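/- Let β ∈ (0,1], τ ∈ ℤ⁺ with τ > 1, and A₀, A₁, Q₀, Q₁ ∈ ℤ⁺. For integers q₀, q₁ define B(q₀,q₁) = {(g₀,g₁) ∈ (1,τ]² : |A₀ g₀ q₀ + A₁ g₁ q₁| < β}, and let B be the union of B(q₀,q₁) over all integer pairs (q₀,q₁) ≠ (0,0) with |q₀| ≤ Q₀ and |q₁| ≤ Q₁. Then the Lebesgue measure of B satisfies 𝓛(B) ≤ 8(τ−1)β · min{Q₁Q₀/A₁, Q₀Q₁/A₀, Q₀τ/A₁, Q₁τ/A₀}. -/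

import Mathlib

/-!
Each cell `B(q₀, q₁)` lies over `g₀ ∈ (1, τ]` inside a strip of vertical width `2β / (A₁|q₁|)`,
so its area is at most `2β(τ - 1) / (A₁|q₁|)`. Since `A₀g₀|q₀| > A₀|q₀|` and `A₁g₁|q₁| ≤ A₁|q₁|τ`,
a nonempty cell forces `A₀|q₀| < A₁|q₁|τ + β ≤ A₁|q₁|τ + 1`, hence `A₀|q₀| ≤ A₁|q₁|τ` by
integrality; in particular both `q₀` and `q₁` are nonzero. Summing the area bound with `|q₁| ≥ 1`
over the `4Q₀Q₁` such pairs gives the term `Q₀Q₁/A₁`; summing it over the at most `2A₁|q₁|τ/A₀`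
nonempty cells of each column `q₁` gives `Q₁τ/A₀`. Exchanging the two coordinates gives the other
two terms.
-/

open MeasureTheory Finset

lemma volume_strip_le {s : Set ℝ} (hs : MeasurableSet s) (a b β : ℝ) (hb : b ≠ 0) :
    volume {p : ℝ × ℝ | p.1 ∈ s ∧ |a * p.1 + b * p.2| < β}
      ≤ volume s * ENNReal.ofReal (2 * β / |b|) := by
  have hmeas : MeasurableSet {p : ℝ × ℝ | p.1 ∈ s ∧ |a * p.1 + b * p.2| < β} :=
    (measurable_fst hs).inter <|
      measurableSet_lt (f := fun p : ℝ × ℝ ↦ |a * p.1 + b * p.2|) (by fun_prop) measurable_const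
  have hfiber : ∀ x, volume (Prod.mk x ⁻¹' {p : ℝ × ℝ | p.1 ∈ s ∧ |a * p.1 + b * p.2| < β})
      ≤ s.indicator (fun _ ↦ ENNReal.ofReal (2 * β / |b|)) x := by
    intro x
    by_cases hx : x ∈ s
    · have hball : Prod.mk x ⁻¹' {p : ℝ × ℝ | p.1 ∈ s ∧ |a * p.1 + b * p.2| < β}
          ⊆ Metric.ball (-(a * x) / b) (β / |b|) := by
        rintro y ⟨-, hy⟩
        have : |y - -(a * x) / b| = |a * x + b * y| / |b| := by
          rw [← abs_div]; congr 1; field_simp; ring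
        rw [Metric.mem_ball, Real.dist_eq, this]
        exact div_lt_div_of_pos_right hy (abs_pos.2 hb)
      rw [Set.indicator_of_mem hx, mul_div_assoc, ← Real.volume_ball]
      exact measure_mono hball
    · simp [hx]
  rw [Measure.volume_eq_prod, Measure.prod_apply hmeas]
  calc _ ≤ _ := lintegral_mono hfiber
    _ = _ := by rw [lintegral_indicator_const hs, mul_comm]

lemma card_Icc_neg_erase_zero (n : ℕ) : #((Icc (-(n : ℤ)) n).erase 0) = 2 * n := by
  rw [card_erase_of_mem (by simp), Int.card_Icc]; omega

lemma card_le_two_mul_of_forall_abs_le {s : Finset ℤ} {r : ℝ} (hr : 0 ≤ r) (h0 : 0 ∉ s)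
    (hs : ∀ z ∈ s, |(z : ℝ)| ≤ r) : (#s : ℝ) ≤ 2 * r := by
  set n := ⌊r⌋₊
  have hsub : s ⊆ (Icc (-(n : ℤ)) n).erase 0 := by
    intro z hz
    have : z.natAbs ≤ n := Nat.le_floor (by rw [Nat.cast_natAbs, Int.cast_abs]; exact hs z hz)
    simp only [mem_erase, mem_Icc]
    exact ⟨fun h ↦ h0 (h ▸ hz), by omega, by omega⟩
  calc (#s : ℝ) ≤ (2 * n : ℕ) := by
        exact_mod_cast card_Icc_neg_erase_zero n ▸ card_le_card hsub
    _ ≤ 2 * r := by push_cast; linarith [Nat.floor_le hr]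

lemma Finset.sum_le_ofReal_card_mul {ι : Type*} (s : Finset ι) (f : ι → ENNReal) {c : ℝ}
    (h : ∀ i ∈ s, f i ≤ ENNReal.ofReal c) : ∑ i ∈ s, f i ≤ ENNReal.ofReal (#s * c) := by
  rw [ENNReal.ofReal_mul (Nat.cast_nonneg _), ENNReal.ofReal_natCast, ← nsmul_eq_mul]
  exact sum_le_card_nsmul s f _ h

section Outage

variable (A0 A1 τ : ℕ) (β : ℝ)

def outageCell (q0 q1 : ℤ) : Set (ℝ × ℝ) :=
  {p | p.1 ∈ Set.Ioc 1 (τ : ℝ) ∧ p.2 ∈ Set.Ioc 1 (τ : ℝ) ∧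
    |(A0 : ℝ) * p.1 * q0 + (A1 : ℝ) * p.2 * q1| < β}

def outageSet (Q0 Q1 : ℕ) : Set (ℝ × ℝ) :=
  ⋃ (q0 : ℤ) (q1 : ℤ) (_ : (q0, q1) ≠ (0, 0) ∧ |q0| ≤ (Q0 : ℤ) ∧ |q1| ≤ (Q1 : ℤ)),
    outageCell A0 A1 τ β q0 q1

lemma preimage_swap_outageCell (q0 q1 : ℤ) :
    Prod.swap ⁻¹' outageCell A1 A0 τ β q1 q0 = outageCell A0 A1 τ β q0 q1 := by
  ext p
  simp only [outageCell, Set.mem_preimage, Set.mem_ofPred_eq, Prod.fst_swap, Prod.snd_swap,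
    add_comm ((A1 : ℝ) * p.2 * q1)]
  tauto

lemma preimage_swap_outageSet (Q0 Q1 : ℕ) :
    Prod.swap ⁻¹' outageSet A1 A0 τ β Q1 Q0 = outageSet A0 A1 τ β Q0 Q1 := by
  simp only [outageSet, Set.preimage_iUnion, preimage_swap_outageCell]
  rw [Set.iUnion_comm]
  simp only [ne_eq, Prod.mk.injEq, and_comm]

lemma volume_outageSet_comm (Q0 Q1 : ℕ) :
    volume (outageSet A0 A1 τ β Q0 Q1) = volume (outageSet A1 A0 τ β Q1 Q0) := by
  rw [← preimage_swap_outageSet, Measure.volume_eq_prod,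
    Measure.measurePreserving_swap.measure_preimage_emb MeasurableEquiv.prodComm.measurableEmbedding]

variable {A0 A1 τ β}

lemma abs_le_of_outageCell_nonempty (hβ : β ≤ 1) {q0 q1 : ℤ}
    (h : (outageCell A0 A1 τ β q0 q1).Nonempty) : (A0 : ℤ) * |q0| ≤ A1 * |q1| * τ := by
  obtain ⟨p, ⟨hg0, -⟩, ⟨hg1, hg1τ⟩, hp⟩ := h
  have hp1 : 0 < p.1 := zero_lt_one.trans hg0
  have hp2 : 0 < p.2 := zero_lt_one.trans hg1
  have key : (A0 : ℝ) * |(q0 : ℝ)| < A1 * |(q1 : ℝ)| * τ + 1 := calc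
    (A0 : ℝ) * |(q0 : ℝ)| ≤ A0 * p.1 * |(q0 : ℝ)| := by gcongr; nlinarith
    _ = |(A0 : ℝ) * p.1 * q0| := by rw [abs_mul, abs_of_nonneg (a := (A0 : ℝ) * p.1) (by positivity)]
    _ ≤ |(A0 : ℝ) * p.1 * q0 + A1 * p.2 * q1| + |(A1 : ℝ) * p.2 * q1| := by
      linarith [abs_sub_abs_le_abs_add ((A0 : ℝ) * p.1 * q0) (A1 * p.2 * q1)]
    _ < 1 + A1 * p.2 * |(q1 : ℝ)| := by
      rw [abs_mul _ (q1 : ℝ), abs_of_nonneg (a := (A1 : ℝ) * p.2) (by positivity)]; linarith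
    _ ≤ A1 * |(q1 : ℝ)| * τ + 1 := by
      have : (A1 : ℝ) * p.2 * |(q1 : ℝ)| ≤ A1 * τ * |(q1 : ℝ)| := by gcongr
      linarith
  exact Int.lt_add_one_iff.mp (by exact_mod_cast key)

lemma outageCell_nonempty_comm {q0 q1 : ℤ} :
    (outageCell A1 A0 τ β q1 q0).Nonempty ↔ (outageCell A0 A1 τ β q0 q1).Nonempty := by
  rw [← preimage_swap_outageCell, Prod.swap_surjective.nonempty_preimage]

lemma ne_zero_of_outageCell_nonempty (hβ : β ≤ 1) (hA0 : 0 < A0) (hA1 : 0 < A1) {q0 q1 : ℤ}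
    (hq : (q0, q1) ≠ (0, 0)) (h : (outageCell A0 A1 τ β q0 q1).Nonempty) : q0 ≠ 0 ∧ q1 ≠ 0 := by
  have h01 := abs_le_of_outageCell_nonempty hβ h
  have h10 := abs_le_of_outageCell_nonempty hβ (outageCell_nonempty_comm.2 h)
  constructor <;> rintro rfl <;> simp_all
  · exact h10.not_gt (by positivity)
  · exact h01.not_gt (by positivity)

lemma volume_outageCell_le (hτ : 1 ≤ τ) (hA1 : 0 < A1) {q1 : ℤ} (hq1 : q1 ≠ 0) (q0 : ℤ) :
    volume (outageCell A0 A1 τ β q0 q1)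
      ≤ ENNReal.ofReal ((τ - 1) * (2 * β / (A1 * |(q1 : ℝ)|))) := by
  have hsub : outageCell A0 A1 τ β q0 q1 ⊆ {p : ℝ × ℝ | p.1 ∈ Set.Ioc 1 (τ : ℝ) ∧
      |((A0 : ℝ) * q0) * p.1 + ((A1 : ℝ) * q1) * p.2| < β} := by
    rintro p ⟨hp1, -, hp⟩
    exact ⟨hp1, by convert hp using 2; ring⟩
  have hb : (A1 : ℝ) * q1 ≠ 0 := by positivity
  refine (measure_mono hsub).trans ((volume_strip_le measurableSet_Ioc _ _ _ hb).trans_eq ?_)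
  rw [Real.volume_Ioc, ← ENNReal.ofReal_mul (by simpa), abs_mul, Nat.abs_cast]

lemma volume_outageSet_le_sum (hβ : β ≤ 1) (hA0 : 0 < A0) (hA1 : 0 < A1) (Q0 Q1 : ℕ) :
    volume (outageSet A0 A1 τ β Q0 Q1) ≤
      ∑ q ∈ (Icc (-(Q0 : ℤ)) Q0).erase 0 ×ˢ (Icc (-(Q1 : ℤ)) Q1).erase 0,
        volume (outageCell A0 A1 τ β q.1 q.2) := by
  refine (measure_mono ?_).trans (measure_biUnion_finset_le _ _)
  rintro p hp
  simp only [outageSet, Set.mem_iUnion, exists_prop] at hp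
  obtain ⟨q0, q1, ⟨hq, hQ0, hQ1⟩, hp⟩ := hp
  obtain ⟨hq0, hq1⟩ := ne_zero_of_outageCell_nonempty hβ hA0 hA1 hq ⟨p, hp⟩
  refine Set.mem_biUnion (x := (q0, q1)) ?_ hp
  exact mem_product.2 ⟨mem_erase.2 ⟨hq0, mem_Icc.2 (abs_le.1 hQ0)⟩,
    mem_erase.2 ⟨hq1, mem_Icc.2 (abs_le.1 hQ1)⟩⟩

lemma volume_outageSet_le_Q0_mul_Q1 (hβ0 : 0 ≤ β) (hβ : β ≤ 1) (hτ : 1 ≤ τ) (hA0 : 0 < A0)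
    (hA1 : 0 < A1) (Q0 Q1 : ℕ) :
    volume (outageSet A0 A1 τ β Q0 Q1) ≤ ENNReal.ofReal (8 * (τ - 1) * β * (Q1 * Q0 / A1)) := by
  refine (volume_outageSet_le_sum hβ hA0 hA1 Q0 Q1).trans <|
    (sum_le_ofReal_card_mul _ _ (c := (τ - 1) * (2 * β / A1)) ?_).trans_eq ?_
  · rintro ⟨q0, q1⟩ hq
    have hq1 : q1 ≠ 0 := (mem_erase.1 (mem_product.1 hq).2).1
    refine (volume_outageCell_le hτ hA1 hq1 q0).trans (ENNReal.ofReal_le_ofReal ?_)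
    have hq1' : (1 : ℝ) ≤ |(q1 : ℝ)| := by exact_mod_cast Int.one_le_abs hq1
    have hτ' : (1 : ℝ) ≤ τ := by exact_mod_cast hτ
    gcongr
    exact le_mul_of_one_le_right (by positivity) hq1'
  · rw [card_product, card_Icc_neg_erase_zero, card_Icc_neg_erase_zero]
    congr 1
    push_cast
    ring

lemma sum_volume_outageCell_le (hβ0 : 0 ≤ β) (hβ : β ≤ 1) (hτ : 1 ≤ τ) (hA0 : 0 < A0)
    (hA1 : 0 < A1) {S : Finset ℤ} (hS : 0 ∉ S) {q1 : ℤ} (hq1 : q1 ≠ 0) :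
    ∑ q0 ∈ S, volume (outageCell A0 A1 τ β q0 q1)
      ≤ ENNReal.ofReal (4 * τ * (τ - 1) * β / A0) := by
  set r : ℝ := A1 * |(q1 : ℝ)| * τ / A0
  set c : ℝ := (τ - 1) * (2 * β / (A1 * |(q1 : ℝ)|))
  have hcard : (#{q0 ∈ S | (A0 : ℤ) * |q0| ≤ A1 * |q1| * τ} : ℝ) ≤ 2 * r := by
    refine card_le_two_mul_of_forall_abs_le (by positivity) (fun h ↦ hS (mem_filter.1 h).1) ?_
    intro q0 hq0
    rw [le_div_iff₀ (by positivity), mul_comm]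
    exact_mod_cast (mem_filter.1 hq0).2
  have hc : 0 ≤ c := by
    have : (1 : ℝ) ≤ τ := by exact_mod_cast hτ
    positivity
  rw [← sum_filter_of_ne fun q0 _ hne ↦
    abs_le_of_outageCell_nonempty hβ (nonempty_of_measure_ne_zero hne)]
  calc _ ≤ ENNReal.ofReal (#{q0 ∈ S | (A0 : ℤ) * |q0| ≤ A1 * |q1| * τ} * c) :=
        sum_le_ofReal_card_mul _ _ fun q0 _ ↦ volume_outageCell_le hτ hA1 hq1 q0
    _ ≤ ENNReal.ofReal (2 * r * c) := by gcongr
    _ = _ := by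
        congr 1
        have : (A1 : ℝ) * |(q1 : ℝ)| ≠ 0 := by positivity
        simp only [r, c]
        field_simp
        ring

lemma volume_outageSet_le_Q1_mul_τ (hβ0 : 0 ≤ β) (hβ : β ≤ 1) (hτ : 1 ≤ τ) (hA0 : 0 < A0)
    (hA1 : 0 < A1) (Q0 Q1 : ℕ) :
    volume (outageSet A0 A1 τ β Q0 Q1) ≤ ENNReal.ofReal (8 * (τ - 1) * β * (Q1 * τ / A0)) := by
  refine (volume_outageSet_le_sum hβ hA0 hA1 Q0 Q1).trans ?_
  rw [sum_product_right]
  refine (sum_le_ofReal_card_mul _ _ fun q1 hq1 ↦ sum_volume_outageCell_le hβ0 hβ hτ hA0 hA1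
    (notMem_erase 0 _) (mem_erase.1 hq1).1).trans_eq ?_
  rw [card_Icc_neg_erase_zero]
  congr 1
  push_cast
  ring

end Outage

theorem stmt_0_general (β : ℝ) (hβ0 : 0 < β) (hβ1 : β ≤ 1)
    (τ : ℕ) (hτ : 1 < τ)
    (A0 A1 Q0 Q1 : ℕ) (hA0 : 0 < A0) (hA1 : 0 < A1) :
    volume (⋃ (q0 : ℤ) (q1 : ℤ) (_ : (q0, q1) ≠ (0, 0) ∧ |q0| ≤ (Q0 : ℤ) ∧ |q1| ≤ (Q1 : ℤ)),
        {p : ℝ × ℝ | p.1 ∈ Set.Ioc 1 (τ : ℝ) ∧ p.2 ∈ Set.Ioc 1 (τ : ℝ) ∧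
          |(A0 : ℝ) * p.1 * q0 + (A1 : ℝ) * p.2 * q1| < β})
      ≤ ENNReal.ofReal (8 * ((τ : ℝ) - 1) * β *
          min (min ((Q1 : ℝ) * Q0 / A1) ((Q0 : ℝ) * Q1 / A0))
              (min ((Q0 : ℝ) * τ / A1) ((Q1 : ℝ) * τ / A0))) := by
  change volume (outageSet A0 A1 τ β Q0 Q1) ≤ _
  have hc : 0 ≤ 8 * ((τ : ℝ) - 1) * β := by
    have : (1 : ℝ) ≤ τ := by exact_mod_cast hτ.le
    positivity
  rw [mul_min_of_nonneg _ _ hc, mul_min_of_nonneg _ _ hc, mul_min_of_nonneg _ _ hc]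
  simp only [ENNReal.ofReal_min, le_min_iff]
  refine ⟨⟨?_, ?_⟩, ?_, ?_⟩
  · exact volume_outageSet_le_Q0_mul_Q1 hβ0.le hβ1 hτ.le hA0 hA1 Q0 Q1
  · rw [volume_outageSet_comm]
    exact volume_outageSet_le_Q0_mul_Q1 hβ0.le hβ1 hτ.le hA1 hA0 Q1 Q0
  · rw [volume_outageSet_comm]
    exact volume_outageSet_le_Q1_mul_τ hβ0.le hβ1 hτ.le hA1 hA0 Q1 Q0
  · exact volume_outageSet_le_Q1_mul_τ hβ0.le hβ1 hτ.le hA0 hA1 Q0 Q1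

theorem stmt_0 (β : ℝ) (hβ0 : 0 < β) (hβ1 : β ≤ 1)
    (τ : ℕ) (hτ : 1 < τ)
    (A0 A1 Q0 Q1 : ℕ) (hA0 : 0 < A0) (hA1 : 0 < A1) (hQ0 : 0 < Q0) (hQ1 : 0 < Q1) :
    volume (⋃ (q0 : ℤ) (q1 : ℤ) (_ : (q0, q1) ≠ (0, 0) ∧ |q0| ≤ (Q0 : ℤ) ∧ |q1| ≤ (Q1 : ℤ)),
        {p : ℝ × ℝ | p.1 ∈ Set.Ioc 1 (τ : ℝ) ∧ p.2 ∈ Set.Ioc 1 (τ : ℝ) ∧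
          |(A0 : ℝ) * p.1 * q0 + (A1 : ℝ) * p.2 * q1| < β})
      ≤ ENNReal.ofReal (8 * ((τ : ℝ) - 1) * β *
          min (min ((Q1 : ℝ) * Q0 / A1) ((Q0 : ℝ) * Q1 / A0))
              (min ((Q0 : ℝ) * τ / A1) ((Q1 : ℝ) * τ / A0))) :=
  stmt_0_general β hβ0 hβ1 τ hτ A0 A1 Q0 Q1 hA0 hA1
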